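/- In the multi-head frozen feature model, consider the full SGD trajectory θ_0, θ_1, θ_2, … trained through head h_j: θ_{t+1} = θ_t − η • Σ_{i∈S} ℓ'(⟨h_j, θ_t.mulVec(g(x_i))⟩, y_i) • (h_j ⬝ g(x_i)ᵀ). If the heads are orthogonal, ⟨h_j, h_k⟩ = 0, then the head-k logits are unchanged throughout all of second-task training: ⟨h_k, θ_t.mulVec(g(x))⟩ = ⟨h_k, θ_0.mulVec(g(x))⟩ for every test point x and every t ∈ ℕ. -/

import Mathlib

open scoped RealInnerProductSpace

/-! Every SGD step through head `u` changes `θ` by a combination of rank-one matrices `u wᵀ`,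
whose image always lies along `u`; a head `v` orthogonal to `u` therefore reads the same logit
before and after the step, and induction on `t` finishes. -/

section
variable {m n ι : Type*} [Fintype m] [Fintype n]

theorem inner_toLp_vecMulVec_mulVec (v u : EuclideanSpace ℝ m) (w z : n → ℝ) :
    ⟪v, WithLp.toLp 2 ((Matrix.vecMulVec u w).mulVec z)⟫ = dotProduct w z * ⟪v, u⟫ := by
  rw [Matrix.vecMulVec_mulVec, op_smul_eq_smul, WithLp.toLp_smul, WithLp.toLp_ofLp,
    real_inner_smul_right]

theorem inner_toLp_mulVec_sub_smul_sum_vecMulVec {u v : EuclideanSpace ℝ m} (huv : ⟪u, v⟫ = 0)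
    (θ : Matrix m n ℝ) (η : ℝ) (S : Finset ι) (c : ι → ℝ) (w : ι → n → ℝ) (z : n → ℝ) :
    ⟪v, WithLp.toLp 2 ((θ - η • ∑ i ∈ S, c i • Matrix.vecMulVec u (w i)).mulVec z)⟫ =
      ⟪v, WithLp.toLp 2 (θ.mulVec z)⟫ := by
  have hvu : ⟪v, u⟫ = 0 := by rwa [real_inner_comm]
  simp only [Matrix.sub_mulVec, Matrix.smul_mulVec, Matrix.sum_mulVec, WithLp.toLp_sub,
    WithLp.toLp_smul, WithLp.toLp_sum, inner_sub_right, real_inner_smul_right, inner_sum,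
    inner_toLp_vecMulVec_mulVec, hvu, mul_zero, Finset.sum_const_zero, sub_zero]

end

theorem multihead_orthogonal_heads_no_forgetting_general
    {α ι : Type*} {p a : ℕ}
    (g : α → EuclideanSpace ℝ (Fin p))
    (S : Finset ι) (x : ι → α) (y : ι → ℝ)
    (ℓ' : ℝ → ℝ → ℝ)
    (η : ℝ)
    (h : ℕ → EuclideanSpace ℝ (Fin a)) (j k : ℕ)
    (θ : ℕ → Matrix (Fin a) (Fin p) ℝ)
    (hstep : ∀ t : ℕ, θ (t + 1) = θ t - η • ∑ i ∈ S,
      ℓ' (⟪h j, (WithLp.toLp 2 ((θ t).mulVec (g (x i))) : EuclideanSpace ℝ (Fin a))⟫) (y i) •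
        Matrix.vecMulVec (h j) (g (x i)))
    (horth : ⟪h j, h k⟫ = 0) :
    ∀ (xtest : α) (t : ℕ),
      ⟪h k, (WithLp.toLp 2 ((θ t).mulVec (g xtest)) : EuclideanSpace ℝ (Fin a))⟫ =
        ⟪h k, (WithLp.toLp 2 ((θ 0).mulVec (g xtest)) : EuclideanSpace ℝ (Fin a))⟫ := by
  intro xtest t
  induction t with
  | zero => rfl
  | succ t ih =>
    rw [hstep t, inner_toLp_mulVec_sub_smul_sum_vecMulVec horth, ih]

/-- **Multi-head frozen feature model: orthogonal heads never forget.** Along the full SGD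
trajectory trained through head `h j`,
`θ (t+1) = θ t − η • ∑ i ∈ S, ℓ'(⟪h j, (θ t).mulVec (g (x i))⟫, y i) • (h j ⬝ (g (x i))ᵀ)`,
if the heads are orthogonal, `⟪h j, h k⟫ = 0`, then the head-`k` logits are unchanged
throughout all of second-task training. -/
theorem multihead_orthogonal_heads_no_forgetting
    {α ι : Type*} {p a : ℕ}
    (g : α → EuclideanSpace ℝ (Fin p))
    (S : Finset ι) (x : ι → α) (y : ι → ℝ)
    (ℓ ℓ' : ℝ → ℝ → ℝ)
    (η : ℝ)
    (h : ℕ → EuclideanSpace ℝ (Fin a)) (j k : ℕ)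
    (θ : ℕ → Matrix (Fin a) (Fin p) ℝ)
    (hstep : ∀ t : ℕ, θ (t + 1) = θ t - η • ∑ i ∈ S,
      ℓ' (⟪h j, (WithLp.toLp 2 ((θ t).mulVec (g (x i))) : EuclideanSpace ℝ (Fin a))⟫) (y i) •
        Matrix.vecMulVec (h j) (g (x i)))
    (horth : ⟪h j, h k⟫ = 0) :
    ∀ (xtest : α) (t : ℕ),
      ⟪h k, (WithLp.toLp 2 ((θ t).mulVec (g xtest)) : EuclideanSpace ℝ (Fin a))⟫ =
        ⟪h k, (WithLp.toLp 2 ((θ 0).mulVec (g xtest)) : EuclideanSpace ℝ (Fin a))⟫ :=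
  multihead_orthogonal_heads_no_forgetting_general g S x y ℓ' η h j k θ hstep horth
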